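/- arXiv:1106.5686 — 2 statements merged into one kernel-verified Lean document; each statement's English description precedes it below -/
import Mathlib

section
/- Let I_α = (x_{i_1}, …, x_{i_r}) be a face ideal generated by r distinct variables. Then I_α^{[q]} + ((x^α)^{q-1}) = ⋂_{j=1}^r (x_{i_1}^q, …, x_{i_{j-1}}^q, x_{i_j}^{q-1}, x_{i_{j+1}}^q, …, x_{i_r}^q), i.e. the ideal I_α^{[q]} + ((x_{i_1}⋯x_{i_r})^{q-1}) equals the intersection over j = 1,…,r of the ideals generated by x_{i_j}^{q-1} together with x_{i_l}^q for all l ≠ j. -/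
open MvPowerSeries

/-- The `q`-th Frobenius power `J^{[q]}` of an ideal `J`: the ideal generated by
the `q`-th powers of the elements of `J`. -/
noncomputable def frobeniusPower {R : Type*} [CommRing R] (J : Ideal R) (q : ℕ) : Ideal R :=
  Ideal.span ((fun f => f ^ q) '' (J : Set R))

/-- The face ideal `I_α` associated to a set of indices `A = supp₊(α)`:
the ideal generated by the variables `x_i`, `i ∈ A`. -/
noncomputable def faceIdeal {n : ℕ} (K : Type*) [Field K] (A : Finset (Fin n)) :
    Ideal (MvPowerSeries (Fin n) K) :=
  Ideal.span ((fun i => (X i : MvPowerSeries (Fin n) K)) '' (A : Set (Fin n)))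


/-- Membership in an ideal generated by monomials in `MvPowerSeries`. -/
theorem mem_span_monomials_iff {n : ℕ} {K : Type*} [Field K] {ι' : Type*} [Fintype ι']
    (a : ι' → (Fin n →₀ ℕ)) (f : MvPowerSeries (Fin n) K) :
    f ∈ Ideal.span (Set.range fun i => monomial (a i) (1 : K)) ↔
      ∀ d : Fin n →₀ ℕ, coeff d f ≠ 0 → ∃ i, a i ≤ d := by
  classical
  rw [Ideal.span, Submodule.mem_span_range_iff_exists_fun]
  constructor
  · rintro ⟨c, rfl⟩ d hd
    by_contra hcon
    push_neg at hcon
    apply hd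
    rw [map_sum]
    refine Finset.sum_eq_zero fun i _ => ?_
    rw [smul_eq_mul, coeff_mul_monomial, if_neg (hcon i)]
  · intro h
    set σ : (Fin n →₀ ℕ) → Option ι' :=
      fun d => if h : ∃ i, a i ≤ d then some h.choose else none with hσ
    have hσ_some : ∀ {d i}, σ d = some i → a i ≤ d := by
      intro d i hdi
      simp only [hσ] at hdi
      split_ifs at hdi with hex
      injection hdi with h'
      exact h' ▸ hex.choose_spec
    set c : ι' → MvPowerSeries (Fin n) K :=
      fun i e => if σ (e + a i) = some i then coeff (e + a i) f else 0 with hc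
    refine ⟨c, MvPowerSeries.ext fun d => ?_⟩
    have key : ∀ i : ι', coeff d (c i • monomial (a i) (1 : K)) =
        if σ d = some i then coeff d f else 0 := by
      intro i
      rw [smul_eq_mul, coeff_mul_monomial]
      by_cases hle : a i ≤ d
      · rw [if_pos hle, mul_one, coeff_apply]
        show (if σ (d - a i + a i) = some i then coeff (d - a i + a i) f else 0) = _
        rw [tsub_add_cancel_of_le hle]
      · rw [if_neg hle, eq_comm, if_neg fun hdi => hle (hσ_some hdi)]
    rw [map_sum, Finset.sum_congr rfl fun i _ => key i]
    rcases hσd : σ d with _ | i₀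
    · rw [Finset.sum_eq_zero fun i _ => by simp]
      symm
      by_contra hne
      obtain ⟨i, hi⟩ := h d hne
      simp only [hσ] at hσd
      split_ifs at hσd with hex
      exact hex ⟨i, hi⟩
    · simp only [hσd, Option.some.injEq]
      rw [Finset.sum_ite_eq Finset.univ i₀ fun _ => coeff d f]
      simp

theorem frobeniusPower_span {R : Type*} [CommRing R] (p : ℕ) [Fact p.Prime] [CharP R p]
    (e : ℕ) (S : Set R) :
    frobeniusPower (Ideal.span S) (p ^ e) = Ideal.span ((fun f => f ^ p ^ e) '' S) := by
  apply le_antisymm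
  · rw [frobeniusPower, Ideal.span_le]
    rintro _ ⟨f, hf, rfl⟩
    simp only [SetLike.mem_coe] at hf ⊢
    induction hf using Submodule.span_induction with
    | mem x hx => exact Ideal.subset_span ⟨x, hx, rfl⟩
    | zero =>
        rw [zero_pow (pow_ne_zero _ (Fact.out (p := p.Prime)).ne_zero)]
        exact zero_mem _
    | add x y hx hy ihx ihy => rw [add_pow_char_pow]; exact add_mem ihx ihy
    | smul r x hx ih => rw [smul_eq_mul, mul_pow]; exact Ideal.mul_mem_left _ _ ih
  · rw [Ideal.span_le]
    rintro _ ⟨f, hf, rfl⟩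
    exact Ideal.subset_span ⟨f, Ideal.subset_span hf, rfl⟩

theorem prod_monomial {n : ℕ} {K : Type*} [Field K] {ι' : Type*} (s : Finset ι')
    (b : ι' → (Fin n →₀ ℕ)) :
    (∏ j ∈ s, monomial (b j) (1 : K)) = monomial (∑ j ∈ s, b j) 1 := by
  classical
  induction s using Finset.induction with
  | empty => simp [monomial_zero_one]
  | insert _ _ h ih =>
      rw [Finset.prod_insert h, Finset.sum_insert h, ih, monomial_mul_monomial, one_mul]

theorem sum_single_le_iff {n r : ℕ} (ι : Fin r → Fin n) (hι : Function.Injective ι)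
    (c : ℕ) (d : Fin n →₀ ℕ) :
    (∑ j, Finsupp.single (ι j) c) ≤ d ↔ ∀ j, c ≤ d (ι j) := by
  classical
  rw [Finsupp.le_def]
  have happ : ∀ i, (∑ j, Finsupp.single (ι j) c) i = ∑ j, if ι j = i then c else 0 := by
    intro i
    rw [Finsupp.finset_sum_apply]
    exact Finset.sum_congr rfl fun j _ => Finsupp.single_apply
  constructor
  · intro H j
    have := H (ι j)
    rw [happ] at this
    refine le_trans ?_ this
    calc c = if ι j = ι j then c else 0 := by simp
    _ ≤ ∑ j', if ι j' = ι j then c else 0 :=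
        Finset.single_le_sum (f := fun j' => if ι j' = ι j then c else 0)
          (fun _ _ => Nat.zero_le _) (Finset.mem_univ j)
  · intro H i
    rw [happ]
    by_cases hex : ∃ j, ι j = i
    · obtain ⟨j₀, rfl⟩ := hex
      have : (∑ j', if ι j' = ι j₀ then c else 0) = c := by
        simp [hι.eq_iff]
      rw [this]
      exact H j₀
    · push_neg at hex
      rw [Finset.sum_eq_zero fun j _ => if_neg (hex j)]
      exact Nat.zero_le _

theorem frobeniusPower_faceIdeal_sup_pow_eq_iInf {K : Type*} [Field K] (p : ℕ)
    [Fact p.Prime] [CharP K p] (e : ℕ) (he : 1 ≤ e) {n : ℕ} (r : ℕ) (hr : 0 < r)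
    (ι : Fin r → Fin n) (hι : Function.Injective ι) :
    frobeniusPower (faceIdeal K (Finset.image ι Finset.univ)) (p ^ e) ⊔
        Ideal.span {(∏ j, (X (ι j) : MvPowerSeries (Fin n) K)) ^ (p ^ e - 1)} =
      ⨅ j : Fin r, Ideal.span (Set.range fun l : Fin r =>
        (X (ι l) : MvPowerSeries (Fin n) K) ^ (if l = j then p ^ e - 1 else p ^ e)) := by
  classical
  haveI : CharP (MvPowerSeries (Fin n) K) p :=
    charP_of_injective_ringHom (f := (C : K →+* MvPowerSeries (Fin n) K))
      (fun a b hab => by simpa using congrArg ((constantCoeff : MvPowerSeries (Fin n) K →+* K)) hab) p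
  have hface : faceIdeal K (Finset.image ι Finset.univ) =
      Ideal.span (Set.range fun l : Fin r => (X (ι l) : MvPowerSeries (Fin n) K)) := by
    unfold faceIdeal
    congr 1
    rw [Finset.coe_image, Finset.coe_univ, Set.image_univ, ← Set.range_comp]
    rfl
  have hfrob : frobeniusPower (faceIdeal K (Finset.image ι Finset.univ)) (p ^ e) =
      Ideal.span (Set.range fun l : Fin r =>
        monomial (Finsupp.single (ι l) (p ^ e)) (1 : K)) := by
    rw [hface, frobeniusPower_span p e, ← Set.range_comp]
    exact congrArg (Ideal.span ∘ Set.range) (funext fun l => X_pow_eq (ι l) (p ^ e))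
  have hprod : (∏ j, (X (ι j) : MvPowerSeries (Fin n) K)) ^ (p ^ e - 1) =
      monomial (∑ j, Finsupp.single (ι j) (p ^ e - 1)) 1 := by
    rw [← Finset.prod_pow,
      Finset.prod_congr rfl fun j _ => X_pow_eq (ι j) (p ^ e - 1)]
    exact prod_monomial _ _
  set A : Option (Fin r) → (Fin n →₀ ℕ) := fun o =>
    Option.elim o (∑ j, Finsupp.single (ι j) (p ^ e - 1))
      (fun l => Finsupp.single (ι l) (p ^ e)) with hA
  have hL : frobeniusPower (faceIdeal K (Finset.image ι Finset.univ)) (p ^ e) ⊔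
      Ideal.span {(∏ j, (X (ι j) : MvPowerSeries (Fin n) K)) ^ (p ^ e - 1)} =
      Ideal.span (Set.range fun o => monomial (A o) (1 : K)) := by
    rw [hfrob, hprod, ← Ideal.span_union]
    congr 1
    ext g
    simp only [Set.mem_union, Set.mem_range, Set.mem_singleton_iff]
    constructor
    · rintro (⟨l, rfl⟩ | rfl)
      · exact ⟨some l, rfl⟩
      · exact ⟨none, rfl⟩
    · rintro ⟨(_ | l), rfl⟩
      · exact Or.inr rfl
      · exact Or.inl ⟨l, rfl⟩
  have hR : ∀ j : Fin r, (Set.range fun l : Fin r =>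
      (X (ι l) : MvPowerSeries (Fin n) K) ^ (if l = j then p ^ e - 1 else p ^ e)) =
      Set.range fun l : Fin r =>
        monomial (Finsupp.single (ι l) (if l = j then p ^ e - 1 else p ^ e)) (1 : K) :=
    fun j => congrArg Set.range (funext fun l => X_pow_eq _ _)
  rw [hL]
  ext f
  simp only [Ideal.mem_iInf, hR, mem_span_monomials_iff]
  constructor
  · intro H j d hd
    obtain ⟨o, ho⟩ := H d hd
    match o with
    | some l =>
        have hle : Finsupp.single (ι l) (p ^ e) ≤ d := ho
        rw [Finsupp.single_le_iff] at hle
        refine ⟨l, Finsupp.single_le_iff.2 ?_⟩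
        split_ifs
        · exact le_trans (Nat.sub_le _ 1) hle
        · exact hle
    | none =>
        have hle : (∑ j', Finsupp.single (ι j') (p ^ e - 1)) ≤ d := ho
        rw [sum_single_le_iff ι hι] at hle
        exact ⟨j, Finsupp.single_le_iff.2 (by rw [if_pos rfl]; exact hle j)⟩
  · intro H d hd
    by_cases hex : ∃ l, p ^ e ≤ d (ι l)
    · obtain ⟨l, hl⟩ := hex
      exact ⟨some l, show Finsupp.single (ι l) (p ^ e) ≤ d from Finsupp.single_le_iff.2 hl⟩
    · refine ⟨none, show (∑ j', Finsupp.single (ι j') (p ^ e - 1)) ≤ d from ?_⟩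
      rw [sum_single_le_iff ι hι]
      intro j
      obtain ⟨l, hlj⟩ := H j d hd
      rw [Finsupp.single_le_iff] at hlj
      by_cases hl : l = j
      · subst hl
        simpa using hlj
      · rw [if_neg hl] at hlj
        exact absurd ⟨l, hlj⟩ hex
end

section
/- Let n ≥ 2 and 1 ≤ k ≤ n−1. Then I_{k,n} = I′_{k,n-1} ∩ J_{k,n}, where I_{k,n} ⊆ S is the intersection of all face ideals of pure height k in x_1,…,x_n, I′_{k,n-1} ⊆ S is the intersection of all face ideals generated by k of the variables x_1,…,x_{n-1} (i.e. the extension to S of I_{k,n-1}), and J_{k,n} = (x_n) + ∑ (x^α), the ideal generated by x_n together with all squarefree monomials x^α of degree n−k+1 in the variables x_1,…,x_{n-1}. -/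
open MvPowerSeries

section Aux

variable {σ : Type*} {K : Type*} [CommRing K]

/-- The ideal of power series all of whose monomials are divisible by some monomial
with exponent in `E`. -/
def expIdeal (E : Finset (σ →₀ ℕ)) : Ideal (MvPowerSeries σ K) where
  carrier := {f | ∀ d : σ →₀ ℕ, (∀ e ∈ E, ¬ e ≤ d) → coeff d f = 0}
  zero_mem' := fun _ _ => map_zero _
  add_mem' := fun {a b} ha hb d hd => by rw [map_add, ha d hd, hb d hd, add_zero]
  smul_mem' := fun r f hf => by
    intro d hd
    classical
    rw [smul_eq_mul, coeff_mul]
    apply Finset.sum_eq_zero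
    intro p hp
    rw [Finset.HasAntidiagonal.mem_antidiagonal] at hp
    rw [hf p.2 (fun e he hle => hd e he (le_trans hle (hp ▸ le_add_self))), mul_zero]

lemma prod_X_eq_monomial (B : Finset σ) :
    (∏ i ∈ B, (X i : MvPowerSeries σ K)) =
      monomial (∑ i ∈ B, Finsupp.single i 1) 1 := by
  classical
  induction B using Finset.induction with
  | empty => simp [monomial_zero_one]
  | insert _ _ h ih =>
      rw [Finset.prod_insert h, Finset.sum_insert h, ih, X_def, monomial_mul_monomial, one_mul]

lemma sum_single_apply [DecidableEq σ] (B : Finset σ) (j : σ) :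
    (∑ i ∈ B, Finsupp.single i (1 : ℕ)) j = if j ∈ B then 1 else 0 := by
  rw [Finset.sum_apply']
  simp [Finsupp.single_apply, Finset.sum_ite_eq']

lemma sum_single_le_iff_s14 [DecidableEq σ] (B : Finset σ) (d : σ →₀ ℕ) :
    (∑ i ∈ B, Finsupp.single i (1 : ℕ)) ≤ d ↔ ∀ i ∈ B, d i ≠ 0 := by
  rw [Finsupp.le_def]
  constructor
  · intro h i hi
    have := h i
    rw [sum_single_apply, if_pos hi] at this
    omega
  · intro h j
    rw [sum_single_apply]
    split_ifs with hj
    · exact Nat.one_le_iff_ne_zero.mpr (h j hj)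
    · exact Nat.zero_le _

lemma mem_span_monomials (E : Finset (σ →₀ ℕ)) (f : MvPowerSeries σ K) :
    f ∈ Ideal.span ((fun e => monomial e (1 : K)) '' (E : Set (σ →₀ ℕ))) ↔
      ∀ d : σ →₀ ℕ, (∀ e ∈ E, ¬ e ≤ d) → coeff d f = 0 := by
  classical
  constructor
  · intro hf
    have hle : Ideal.span ((fun e => monomial e (1 : K)) '' (E : Set (σ →₀ ℕ))) ≤
        expIdeal E := by
      rw [Ideal.span_le]
      rintro g ⟨e, he, rfl⟩
      intro d hd
      rw [coeff_monomial]
      split_ifs with hde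
      · exact absurd le_rfl (hde ▸ hd e he)
      · rfl
    exact hle hf
  · intro h
    -- choice of a witness exponent dividing `d`
    let pick : (σ →₀ ℕ) → (σ →₀ ℕ) := fun d =>
      if hd : ∃ e ∈ E, e ≤ d then hd.choose else 0
    have pick_spec : ∀ d : σ →₀ ℕ, (∃ e ∈ E, e ≤ d) → pick d ∈ E ∧ pick d ≤ d := by
      intro d hd
      simp only [pick, dif_pos hd]
      exact ⟨hd.choose_spec.1, hd.choose_spec.2⟩
    let g : (σ →₀ ℕ) → MvPowerSeries σ K := fun e c =>
      if pick (c + e) = e then coeff (c + e) f else 0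
    have key : ∀ d : σ →₀ ℕ, ∀ e ∈ E,
        coeff d (monomial e 1 * g e) =
          if pick d = e ∧ e ≤ d then coeff d f else 0 := by
      intro d e _
      rw [coeff_monomial_mul]
      by_cases hed : e ≤ d
      · rw [if_pos hed, one_mul]
        have hc : coeff (d - e) (g e) =
            if pick ((d - e) + e) = e then coeff ((d - e) + e) f else 0 := rfl
        rw [hc, tsub_add_cancel_of_le hed]
        by_cases hpe : pick d = e
        · rw [if_pos hpe, if_pos ⟨hpe, hed⟩]
        · rw [if_neg hpe, if_neg (fun hco => hpe hco.1)]
      · rw [if_neg hed, if_neg (fun hco => hed hco.2)]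
    have hf : f = ∑ e ∈ E, monomial e 1 * g e := by
      ext d
      rw [map_sum]
      by_cases hd : ∃ e ∈ E, e ≤ d
      · obtain ⟨hmem, hle⟩ := pick_spec d hd
        rw [Finset.sum_eq_single_of_mem (pick d) hmem]
        · rw [key d (pick d) hmem, if_pos ⟨rfl, hle⟩]
        · intro e he hne
          rw [key d e he, if_neg (fun hco => hne hco.1.symm)]
      · rw [h d (fun e he hle => hd ⟨e, he, hle⟩)]
        apply (Finset.sum_eq_zero _).symm
        intro e he
        rw [key d e he, if_neg (fun hco => hd ⟨e, he, hco.2⟩)]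
    rw [hf]
    apply Ideal.sum_mem
    intro e he
    exact Ideal.mul_mem_right _ _ (Ideal.subset_span ⟨e, he, rfl⟩)

end Aux

lemma mem_faceIdeal_iff {n : ℕ} {K : Type*} [Field K] (A : Finset (Fin n))
    (f : MvPowerSeries (Fin n) K) :
    f ∈ faceIdeal K A ↔
      ∀ d : Fin n →₀ ℕ, (∀ i ∈ A, d i = 0) → coeff d f = 0 := by
  classical
  have hs : ((fun i => (X i : MvPowerSeries (Fin n) K)) '' (A : Set (Fin n))) =
      (fun e => monomial e (1 : K)) ''
        ((A.image fun i => Finsupp.single i (1 : ℕ)) : Set (Fin n →₀ ℕ)) := by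
    rw [Finset.coe_image, Set.image_image]
    exact Set.image_congr fun i _ => X_def i
  rw [faceIdeal, hs, mem_span_monomials]
  constructor
  · intro h d hd
    apply h d
    intro e he
    rw [Finset.mem_image] at he
    obtain ⟨i, hi, rfl⟩ := he
    rw [Finsupp.single_le_iff]
    simp [hd i hi]
  · intro h d hd
    apply h d
    intro i hi
    have := hd _ (Finset.mem_image_of_mem _ hi)
    rw [Finsupp.single_le_iff] at this
    omega

lemma key_combo {n m : ℕ} (hn : 2 ≤ n) (hm : 1 ≤ m) (hmn : m ≤ n - 1)
    (d : Fin n →₀ ℕ) :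
    (∀ A : Finset (Fin n), A.card = m → ∃ i ∈ A, d i ≠ 0) ↔
      ((∀ A : Finset (Fin n), A.card = m → (∀ i ∈ A, (i : ℕ) < n - 1) →
          ∃ i ∈ A, d i ≠ 0) ∧
        (d ⟨n - 1, by omega⟩ ≠ 0 ∨
          ∃ B : Finset (Fin n), (B.card = n - m + 1 ∧ ∀ i ∈ B, (i : ℕ) < n - 1) ∧
            ∀ i ∈ B, d i ≠ 0)) := by
  classical
  set v : Fin n := ⟨n - 1, by omega⟩ with hv_def
  constructor
  · intro h
    refine ⟨fun A hA _ => h A hA, ?_⟩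
    by_cases hv : d v ≠ 0
    · exact Or.inl hv
    · push_neg at hv
      right
      have hcardle : d.support.card ≤ n := le_trans (Finset.card_le_univ _) (by simp)
      have hsupp : n - m + 1 ≤ d.support.card := by
        by_contra hc
        push_neg at hc
        have h1 : m ≤ d.supportᶜ.card := by
          rw [Finset.card_compl, Fintype.card_fin]
          omega
        obtain ⟨A, hAsub, hAcard⟩ := Finset.exists_subset_card_eq h1
        obtain ⟨i, hiA, hid⟩ := h A hAcard
        have hmem := hAsub hiA
        rw [Finset.mem_compl, Finsupp.notMem_support_iff] at hmem
        exact hid hmem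
      obtain ⟨B, hBsub, hBcard⟩ := Finset.exists_subset_card_eq hsupp
      have hBne : ∀ i ∈ B, d i ≠ 0 := fun i hi =>
        Finsupp.mem_support_iff.mp (hBsub hi)
      refine ⟨B, ⟨hBcard, ?_⟩, hBne⟩
      intro i hi
      have hiv : i ≠ v := by
        intro hiv
        exact hBne i hi (hiv ▸ hv)
      have h2 : (i : ℕ) < n := i.isLt
      have h3 : (i : ℕ) ≠ n - 1 := fun hc => hiv (Fin.ext (by simp [hv_def, hc]))
      omega
  · rintro ⟨h1, h2⟩ A hA
    rcases h2 with hv | ⟨B, ⟨hBcard, hBlt⟩, hBne⟩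
    · by_cases hvA : v ∈ A
      · exact ⟨v, hvA, hv⟩
      · refine h1 A hA fun i hi => ?_
        have hiv : i ≠ v := fun hc => hvA (hc ▸ hi)
        have h2 : (i : ℕ) < n := i.isLt
        have h3 : (i : ℕ) ≠ n - 1 := fun hc => hiv (Fin.ext (by simp [hv_def, hc]))
        omega
    · have hne : (A ∩ B).Nonempty := by
        rw [← Finset.card_pos]
        have hu : (A ∪ B).card ≤ n :=
          le_trans (Finset.card_le_univ _) (by simp)
        have heq := Finset.card_union_add_card_inter A B
        omega
      obtain ⟨i, hi⟩ := hne
      rw [Finset.mem_inter] at hi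
      exact ⟨i, hi.1, hBne i hi.2⟩

theorem iInf_faceIdeal_eq_inf {K : Type*} [Field K] {n : ℕ} (hn : 2 ≤ n)
    (m : ℕ) (hm : 1 ≤ m) (hmn : m ≤ n - 1) :
    (⨅ (A : Finset (Fin n)) (_ : A.card = m), faceIdeal K A) =
      (⨅ (A : Finset (Fin n))
        (_ : A.card = m ∧ ∀ i ∈ A, (i : ℕ) < n - 1), faceIdeal K A) ⊓
      Ideal.span ({(X ⟨n - 1, by omega⟩ : MvPowerSeries (Fin n) K)} ∪
        ((fun B : Finset (Fin n) =>
          ∏ i ∈ B, (X i : MvPowerSeries (Fin n) K)) ''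
            {B : Finset (Fin n) | B.card = n - m + 1 ∧ ∀ i ∈ B, (i : ℕ) < n - 1})) := by
  classical
  set v : Fin n := ⟨n - 1, by omega⟩ with hv_def
  -- the finite set of generator exponents for the span on the right
  set E₂ : Finset (Fin n →₀ ℕ) :=
    insert (Finsupp.single v 1)
      ((Finset.univ.filter fun B : Finset (Fin n) =>
          B.card = n - m + 1 ∧ ∀ i ∈ B, (i : ℕ) < n - 1).image
        fun B => ∑ i ∈ B, Finsupp.single i 1) with hE₂_def
  have hset : ({(X v : MvPowerSeries (Fin n) K)} ∪
      ((fun B : Finset (Fin n) =>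
        ∏ i ∈ B, (X i : MvPowerSeries (Fin n) K)) ''
          {B : Finset (Fin n) | B.card = n - m + 1 ∧ ∀ i ∈ B, (i : ℕ) < n - 1})) =
      (fun e => monomial e (1 : K)) '' (E₂ : Set (Fin n →₀ ℕ)) := by
    ext g
    simp only [Set.mem_union, Set.mem_singleton_iff, Set.mem_image, Set.mem_setOf_eq,
      hE₂_def, Finset.coe_insert, Set.mem_insert_iff, Finset.coe_image, Finset.coe_filter,
      Finset.mem_univ, true_and]
    constructor
    · rintro (rfl | ⟨B, hB, rfl⟩)
      · exact ⟨Finsupp.single v 1, Or.inl rfl, (X_def v).symm⟩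
      · exact ⟨∑ i ∈ B, Finsupp.single i 1, Or.inr ⟨B, hB, rfl⟩,
          (prod_X_eq_monomial B).symm⟩
    · rintro ⟨e, (rfl | ⟨B, hB, rfl⟩), rfl⟩
      · exact Or.inl (X_def v).symm
      · exact Or.inr ⟨B, hB, prod_X_eq_monomial B⟩
  ext f
  rw [Ideal.mem_inf]
  -- characterize the three memberships
  have memL : f ∈ (⨅ (A : Finset (Fin n)) (_ : A.card = m), faceIdeal K A) ↔
      ∀ d : Fin n →₀ ℕ, coeff d f ≠ 0 →
        ∀ A : Finset (Fin n), A.card = m → ∃ i ∈ A, d i ≠ 0 := by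
    simp only [Submodule.mem_iInf, mem_faceIdeal_iff]
    constructor
    · intro h d hc A hA
      by_contra hcon
      push_neg at hcon
      exact hc (h A hA d hcon)
    · intro h A hA d hd
      by_contra hc
      obtain ⟨i, hi, hne⟩ := h d hc A hA
      exact hne (hd i hi)
  have memR1 : f ∈ (⨅ (A : Finset (Fin n))
      (_ : A.card = m ∧ ∀ i ∈ A, (i : ℕ) < n - 1), faceIdeal K A) ↔
      ∀ d : Fin n →₀ ℕ, coeff d f ≠ 0 →
        ∀ A : Finset (Fin n), A.card = m → (∀ i ∈ A, (i : ℕ) < n - 1) →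
          ∃ i ∈ A, d i ≠ 0 := by
    simp only [Submodule.mem_iInf, mem_faceIdeal_iff]
    constructor
    · intro h d hc A hA hA'
      by_contra hcon
      push_neg at hcon
      exact hc (h A ⟨hA, hA'⟩ d hcon)
    · intro h A hA d hd
      by_contra hc
      obtain ⟨i, hi, hne⟩ := h d hc A hA.1 hA.2
      exact hne (hd i hi)
  have memR2 : f ∈ Ideal.span ({(X v : MvPowerSeries (Fin n) K)} ∪
      ((fun B : Finset (Fin n) =>
        ∏ i ∈ B, (X i : MvPowerSeries (Fin n) K)) ''
          {B : Finset (Fin n) | B.card = n - m + 1 ∧ ∀ i ∈ B, (i : ℕ) < n - 1})) ↔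
      ∀ d : Fin n →₀ ℕ, coeff d f ≠ 0 →
        (d v ≠ 0 ∨
          ∃ B : Finset (Fin n), (B.card = n - m + 1 ∧ ∀ i ∈ B, (i : ℕ) < n - 1) ∧
            ∀ i ∈ B, d i ≠ 0) := by
    rw [hset, mem_span_monomials]
    have hmemE₂ : ∀ e : Fin n →₀ ℕ, e ∈ E₂ ↔
        e = Finsupp.single v 1 ∨
          ∃ B : Finset (Fin n), (B.card = n - m + 1 ∧ ∀ i ∈ B, (i : ℕ) < n - 1) ∧
            (∑ i ∈ B, Finsupp.single i 1) = e := by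
      intro e
      simp [hE₂_def]
    constructor
    · intro h d hc
      by_contra hcon
      push_neg at hcon
      obtain ⟨hv, hB⟩ := hcon
      apply hc
      apply h d
      intro e he
      rcases (hmemE₂ e).mp he with rfl | ⟨B, hBP, rfl⟩
      · rw [Finsupp.single_le_iff]
        simp [hv]
      · rw [sum_single_le_iff_s14]
        intro hall
        obtain ⟨i, hi, h0⟩ := hB B hBP
        exact hall i hi h0
    · intro h d hd
      by_contra hc
      rcases h d hc with hv | ⟨B, hBP, hBall⟩
      · exact hd (Finsupp.single v 1) ((hmemE₂ _).mpr (Or.inl rfl))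
          (Finsupp.single_le_iff.mpr (Nat.one_le_iff_ne_zero.mpr hv))
      · exact hd (∑ i ∈ B, Finsupp.single i 1)
          ((hmemE₂ _).mpr (Or.inr ⟨B, hBP, rfl⟩))
          ((sum_single_le_iff_s14 _ _).mpr hBall)
  rw [memL, memR1, memR2]
  constructor
  · intro h
    exact ⟨fun d hc A hA hA' => ((key_combo hn hm hmn d).mp (h d hc)).1 A hA hA',
      fun d hc => ((key_combo hn hm hmn d).mp (h d hc)).2⟩
  · rintro ⟨h1, h2⟩ d hc
    exact (key_combo hn hm hmn d).mpr ⟨h1 d hc, h2 d hc⟩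
end
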